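/- Suppose each G_j : 𝒳 → ℝ^d and each h_j : 𝒳 → ℝ is Lipschitz continuous on 𝒳. Fix θ̂ ∈ Θ and r ∈ [0,1]. Then 𝔻(𝔛^λ(θ̂, r), 𝔛(θ̂, r)) → 0 as λ ↓ 0; that is, for every ε > 0 there exists λ₀ > 0 such that for all λ ∈ (0, λ₀] and every x ∈ 𝔛^λ(θ̂, r), d(x, 𝔛(θ̂, r)) ≤ ε. -/

import Mathlib

open Set Filter MeasureTheory
open scoped ENNReal

noncomputable section

/-- The probability simplex Θ in ℝⁿ. -/
def simplex (n : ℕ) : Set (Fin n → ℝ) := {θ | ∑ j, θ j = 1 ∧ ∀ j, 0 ≤ θ j}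

/-- Ambiguity set `𝔹∞(c, r) ∩ Θ`.  (The norm on `Fin n → ℝ` is the sup norm.) -/
def amb {n : ℕ} (c : Fin n → ℝ) (r : ℝ) : Set (Fin n → ℝ) :=
  {θ | ‖θ - c‖ ≤ r} ∩ simplex n

/-- Regularized lower-level objective `∑_j θ_j h_j(x) − λ‖θ‖²` (Euclidean norm squared). -/
def obj {n d : ℕ} (h : Fin n → (Fin d → ℝ) → ℝ) (lam : ℝ) (x : Fin d → ℝ)
    (θ : Fin n → ℝ) : ℝ :=
  (∑ j, θ j * h j x) - lam * ∑ j, (θ j) ^ 2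

/-- Optimal value `ν^λ(x, c, r)` of the regularized lower-level problem. -/
def nuval {n d : ℕ} (h : Fin n → (Fin d → ℝ) → ℝ) (lam : ℝ) (x : Fin d → ℝ)
    (c : Fin n → ℝ) (r : ℝ) : ℝ :=
  sSup (obj h lam x '' amb c r)

/-- Maximizer set `ϑ^λ(x, c, r)` of the regularized lower-level problem. -/
def argmaxSet {n d : ℕ} (h : Fin n → (Fin d → ℝ) → ℝ) (lam : ℝ) (x : Fin d → ℝ)
    (c : Fin n → ℝ) (r : ℝ) : Set (Fin n → ℝ) :=
  {θ ∈ amb c r | obj h lam x θ = nuval h lam x c r}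

/-- Normal cone of `X` at `x` (standard inner product on ℝ^d). -/
def normalCone {d : ℕ} (X : Set (Fin d → ℝ)) (x : Fin d → ℝ) : Set (Fin d → ℝ) :=
  {v | ∀ y ∈ X, ∑ i, v i * (y i - x i) ≤ 0}

/-- x-solution set `𝔛^λ(c, r)` of the (regularized) Bayesian DRVI. -/
def solSet {n d : ℕ} (G : Fin n → (Fin d → ℝ) → Fin d → ℝ)
    (h : Fin n → (Fin d → ℝ) → ℝ) (lam : ℝ) (X : Set (Fin d → ℝ))
    (c : Fin n → ℝ) (r : ℝ) : Set (Fin d → ℝ) :=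
  {x ∈ X | ∃ θ ∈ argmaxSet h lam x c r,
      ∀ y ∈ X, 0 ≤ ∑ i, (∑ j, θ j * G j x i) * (y i - x i)}

/-- One-sided deviation `𝔻(S, T)` (the metric of the Pi type is the sup metric). -/
def dev {α : Type*} [PseudoMetricSpace α] (S T : Set α) : ℝ :=
  sSup ((fun s => Metric.infDist s T) '' S)

/-- One-sided deviation with values in `ℝ≥0∞`. -/
def devE {α : Type*} [PseudoMetricSpace α] (S T : Set α) : ℝ≥0∞ :=
  ⨆ s ∈ S, ENNReal.ofReal (Metric.infDist s T)

/-- Lower-level growth function `ψ_x^λ` at parameters `(c, r)`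
(values in `[0,∞]`; the infimum over the empty set is `⊤`). -/
def psiLow {n d : ℕ} (h : Fin n → (Fin d → ℝ) → ℝ) (lam : ℝ) (x : Fin d → ℝ)
    (c : Fin n → ℝ) (r : ℝ) (τ : ℝ) : ℝ≥0∞ :=
  ⨅ θ ∈ {θ ∈ amb c r | τ ≤ Metric.infDist θ (argmaxSet h lam x c r)},
    ENNReal.ofReal (nuval h lam x c r - obj h lam x θ)

/-- Generalized inverse `(ψ_x^λ)⁻¹(t) = sup{τ ≥ 0 : ψ_x^λ(τ) ≤ t}`. -/
def psiLowInv {n d : ℕ} (h : Fin n → (Fin d → ℝ) → ℝ) (lam : ℝ) (x : Fin d → ℝ)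
    (c : Fin n → ℝ) (r : ℝ) (t : ℝ) : ℝ≥0∞ :=
  ⨆ τ ∈ {τ : ℝ | 0 ≤ τ ∧ psiLow h lam x c r τ ≤ ENNReal.ofReal t}, ENNReal.ofReal τ

/-- `Ψ_x^λ(η) = η + (ψ_x^λ)⁻¹(2η)`. -/
def PsiLow {n d : ℕ} (h : Fin n → (Fin d → ℝ) → ℝ) (lam : ℝ) (x : Fin d → ℝ)
    (c : Fin n → ℝ) (r : ℝ) (η : ℝ) : ℝ≥0∞ :=
  ENNReal.ofReal η + psiLowInv h lam x c r (2 * η)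

/-- Residual `d(0, ∑_j θ_j G_j(x) + N_X(x))` (ℓ∞ distance). -/
def resid {n d : ℕ} (G : Fin n → (Fin d → ℝ) → Fin d → ℝ) (X : Set (Fin d → ℝ))
    (x : Fin d → ℝ) (θ : Fin n → ℝ) : ℝ :=
  Metric.infDist (0 : Fin d → ℝ)
    ((fun w => (fun i => ∑ j, θ j * G j x i) + w) '' normalCone X x)

/-- Solution-set growth function `ψ^λ_{c,r}` (values in `[0,∞]`). -/
def psiSol {n d : ℕ} (G : Fin n → (Fin d → ℝ) → Fin d → ℝ)
    (h : Fin n → (Fin d → ℝ) → ℝ) (lam : ℝ) (X : Set (Fin d → ℝ))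
    (c : Fin n → ℝ) (r : ℝ) (τ : ℝ) : ℝ≥0∞ :=
  ⨅ x ∈ {x ∈ X | τ ≤ Metric.infDist x (solSet G h lam X c r)},
    ⨅ θ ∈ argmaxSet h lam x c r, ENNReal.ofReal (resid G X x θ)

/-- Generalized inverse `(ψ^λ_{c,r})⁻¹(t) = sup{τ ≥ 0 : ψ^λ_{c,r}(τ) ≤ t}`. -/
def psiSolInv {n d : ℕ} (G : Fin n → (Fin d → ℝ) → Fin d → ℝ)
    (h : Fin n → (Fin d → ℝ) → ℝ) (lam : ℝ) (X : Set (Fin d → ℝ))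
    (c : Fin n → ℝ) (r : ℝ) (t : ℝ) : ℝ≥0∞ :=
  ⨆ τ ∈ {τ : ℝ | 0 ≤ τ ∧ psiSol G h lam X c r τ ≤ ENNReal.ofReal t}, ENNReal.ofReal τ

/-! Over `λ ∈ [0, 1]`, the triples `(λ, x, θ)` with `x ∈ 𝒳`, `θ` a maximizer of the regularized
lower-level problem and `x` solving the variational inequality for `θ` form a compact set: the
box `[0, 1] × 𝒳 × Θ̂` is compact and, `G` and `h` being continuous, every defining condition is
closed. Hence the graph of `λ ↦ 𝔛^λ` over `[0, 1]` is compact, and its fibre over `0` is `𝔛`.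
The parameters `λ` carrying a point at distance `≥ ε` from `𝔛` then form a compact set missing
`0`, so they stay away from `0`. -/

open Metric Topology in
theorem eventually_forall_infDist_lt_of_isCompact {α : Type*} [PseudoMetricSpace α]
    {C : Set (ℝ × α)} (hC : IsCompact C) {S : Set α} (hS : ∀ x, ((0 : ℝ), x) ∈ C → x ∈ S)
    {ε : ℝ} (hε : 0 < ε) : ∀ᶠ t in 𝓝 (0 : ℝ), ∀ x, (t, x) ∈ C → infDist x S < ε := by
  set B := C ∩ {p | ε ≤ infDist p.2 S}
  have hB : IsCompact B :=
    hC.inter_right (isClosed_le continuous_const ((continuous_infDist_pt S).comp continuous_snd))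
  have h0 : (0 : ℝ) ∉ Prod.fst '' B := by
    rintro ⟨⟨_, x⟩, ⟨hx, hεx : ε ≤ infDist x S⟩, rfl⟩
    rw [infDist_zero_of_mem (hS x hx)] at hεx
    exact hεx.not_gt hε
  filter_upwards [(hB.image continuous_fst).isClosed.isOpen_compl.mem_nhds h0] with t ht x hx
  by_contra! hge
  exact ht ⟨(t, x), ⟨hx, hge⟩, rfl⟩

theorem IsClosed.sep_forall_le {β ι α : Type*} [TopologicalSpace β] [TopologicalSpace α]
    [Preorder α] [OrderClosedTopology α] {s : Set β} (hs : IsClosed s) {f g : ι → β → α}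
    (hf : ∀ i, ContinuousOn (f i) s) (hg : ∀ i, ContinuousOn (g i) s) (t : Set ι) :
    IsClosed {b ∈ s | ∀ i ∈ t, f i b ≤ g i b} := by
  have : {b ∈ s | ∀ i ∈ t, f i b ≤ g i b} = s ∩ ⋂ i ∈ t, {b ∈ s | f i b ≤ g i b} := by
    ext b
    simp only [mem_sep_iff, mem_inter_iff, mem_iInter₂]
    exact ⟨fun ⟨hb, H⟩ => ⟨hb, fun i hi => ⟨hb, H i hi⟩⟩,
      fun ⟨hb, H⟩ => ⟨hb, fun i hi => (H i hi).2⟩⟩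
  rw [this]
  exact hs.inter (isClosed_biInter fun i _ => hs.isClosed_le (hf i) (hg i))

theorem continuousOn_of_norm_sub_le_mul {E F : Type*} [SeminormedAddCommGroup E]
    [SeminormedAddCommGroup F] {f : E → F} {s : Set E} {L : ℝ}
    (hf : ∀ x ∈ s, ∀ y ∈ s, ‖f x - f y‖ ≤ L * ‖x - y‖) : ContinuousOn f s :=
  (LipschitzOnWith.of_dist_le' (by simpa only [dist_eq_norm] using hf)).continuousOn

theorem simplex_eq_stdSimplex (n : ℕ) : simplex n = stdSimplex ℝ (Fin n) := by
  ext θ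
  exact and_comm

theorem isCompact_amb {n : ℕ} (c : Fin n → ℝ) (r : ℝ) : IsCompact (amb c r) := by
  rw [amb, simplex_eq_stdSimplex]
  exact (isCompact_stdSimplex ℝ (Fin n)).inter_left (isClosed_le (by fun_prop) continuous_const)

section Regularized

variable {n d : ℕ} (G : Fin n → (Fin d → ℝ) → Fin d → ℝ) (h : Fin n → (Fin d → ℝ) → ℝ)
  (X : Set (Fin d → ℝ)) (c : Fin n → ℝ) (r : ℝ)

theorem mem_argmaxSet_iff {lam : ℝ} {x : Fin d → ℝ} {θ : Fin n → ℝ} :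
    θ ∈ argmaxSet h lam x c r ↔ θ ∈ amb c r ∧ ∀ θ' ∈ amb c r, obj h lam x θ' ≤ obj h lam x θ := by
  have hbdd : BddAbove (obj h lam x '' amb c r) :=
    ((isCompact_amb c r).image (by unfold obj; fun_prop)).bddAbove
  refine and_congr_right fun hθ => ⟨fun heq θ' hθ' => ?_, fun hmax => ?_⟩
  · rw [heq]
    exact le_csSup hbdd (mem_image_of_mem _ hθ')
  · exact (IsGreatest.csSup_eq ⟨mem_image_of_mem _ hθ, forall_mem_image.2 hmax⟩).symm

def solGraph : Set (ℝ × (Fin d → ℝ)) :=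
  {p | p.1 ∈ Icc 0 1 ∧ p.2 ∈ solSet G h p.1 X c r}

def solTriples : Set (ℝ × (Fin d → ℝ) × (Fin n → ℝ)) :=
  {q ∈ Icc 0 1 ×ˢ X ×ˢ amb c r |
    (∀ θ' ∈ amb c r, obj h q.1 q.2.1 θ' ≤ obj h q.1 q.2.1 q.2.2) ∧
      ∀ y ∈ X, 0 ≤ ∑ i, (∑ j, q.2.2 j * G j q.2.1 i) * (y i - q.2.1 i)}

theorem solGraph_eq_image :
    solGraph G h X c r = (fun q => (q.1, q.2.1)) '' solTriples G h X c r := by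
  ext ⟨lam, x⟩
  simp only [solGraph, solSet, solTriples, mem_argmaxSet_iff, mem_ofPred_eq, mem_image,
    mem_prod, Prod.mk.injEq, Prod.exists]
  constructor
  · rintro ⟨hlam, hx, θ, ⟨hθ, hmax⟩, hvi⟩
    exact ⟨lam, x, θ, ⟨⟨hlam, hx, hθ⟩, hmax, hvi⟩, rfl, rfl⟩
  · rintro ⟨lam, x, θ, ⟨⟨hlam, hx, hθ⟩, hmax, hvi⟩, rfl, rfl⟩
    exact ⟨hlam, hx, θ, ⟨hθ, hmax⟩, hvi⟩

theorem isCompact_solTriples (hX : IsCompact X) (hG : ∀ j, ContinuousOn (G j) X)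
    (hh : ∀ j, ContinuousOn (h j) X) : IsCompact (solTriples G h X c r) := by
  set K₀ := Icc (0 : ℝ) 1 ×ˢ X ×ˢ amb c r
  have hK₀ : IsCompact K₀ := isCompact_Icc.prod (hX.prod (isCompact_amb c r))
  have hmaps : MapsTo (fun q : ℝ × (Fin d → ℝ) × (Fin n → ℝ) => q.2.1) K₀ X := fun q hq => hq.2.1
  have hhq : ∀ j, ContinuousOn (fun q : ℝ × (Fin d → ℝ) × (Fin n → ℝ) => h j q.2.1) K₀ :=
    fun j => (hh j).comp (by fun_prop) hmaps
  have hGq : ∀ j i, ContinuousOn (fun q : ℝ × (Fin d → ℝ) × (Fin n → ℝ) => G j q.2.1 i) K₀ :=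
    fun j i => (continuous_apply i).comp_continuousOn ((hG j).comp (by fun_prop) hmaps)
  have hθq : ∀ j, ContinuousOn (fun q : ℝ × (Fin d → ℝ) × (Fin n → ℝ) => q.2.2 j) K₀ :=
    fun j => by fun_prop
  have hmax := hK₀.isClosed.sep_forall_le
    (f := fun θ' q => obj h q.1 q.2.1 θ') (g := fun _ q => obj h q.1 q.2.1 q.2.2)
    (fun θ' => by unfold obj; fun_prop) (fun _ => by unfold obj; fun_prop) (amb c r)
  have hvi := hK₀.isClosed.sep_forall_le (f := fun _ _ => (0 : ℝ))
    (g := fun y q => ∑ i, (∑ j, q.2.2 j * G j q.2.1 i) * (y i - q.2.1 i))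
    (fun _ => continuousOn_const) (fun y => continuousOn_finsetSum _ fun i _ =>
      (continuousOn_finsetSum _ fun j _ => (hθq j).mul (hGq j i)).mul (by fun_prop)) X
  refine hK₀.of_isClosed_subset ?_ fun q hq => hq.1
  rw [solTriples, sep_and]
  exact hmax.inter hvi

end Regularized

theorem reg_solSet_convergence_general {n d : ℕ}
    (X : Set (Fin d → ℝ)) (hXcomp : IsCompact X)
    (G : Fin n → (Fin d → ℝ) → Fin d → ℝ) (h : Fin n → (Fin d → ℝ) → ℝ)
    (hGLip : ∀ j, ∃ LG : ℝ, ∀ x ∈ X, ∀ y ∈ X, ‖G j x - G j y‖ ≤ LG * ‖x - y‖)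
    (hhLip : ∀ j, ∃ Lh : ℝ, ∀ x ∈ X, ∀ y ∈ X, |h j x - h j y| ≤ Lh * ‖x - y‖)
    (θhat : Fin n → ℝ)
    (r : ℝ) :
    ∀ ε : ℝ, 0 < ε → ∃ lam0 : ℝ, 0 < lam0 ∧ ∀ lam : ℝ, 0 < lam → lam ≤ lam0 →
      ∀ x ∈ solSet G h lam X θhat r,
        Metric.infDist x (solSet G h 0 X θhat r) ≤ ε := by
  intro ε hε
  have hG : ∀ j, ContinuousOn (G j) X := fun j =>
    let ⟨_, hL⟩ := hGLip j
    continuousOn_of_norm_sub_le_mul hL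
  have hh : ∀ j, ContinuousOn (h j) X := fun j =>
    let ⟨_, hL⟩ := hhLip j
    continuousOn_of_norm_sub_le_mul (by simpa only [Real.norm_eq_abs] using hL)
  have hgraph : IsCompact (solGraph G h X θhat r) := by
    rw [solGraph_eq_image]
    exact (isCompact_solTriples G h X θhat r hXcomp hG hh).image (by fun_prop)
  obtain ⟨δ, hδ, hclose⟩ := Metric.eventually_nhds_iff.1
    (eventually_forall_infDist_lt_of_isCompact hgraph (fun _ hx => hx.2) hε)
  refine ⟨min 1 (δ / 2), by positivity, fun lam hlam hlam0 x hx => ?_⟩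
  have hlamδ : dist lam 0 < δ := by
    rw [Real.dist_0_eq_abs, abs_of_pos hlam]
    linarith [min_le_right 1 (δ / 2)]
  exact (hclose hlamδ x ⟨⟨hlam.le, hlam0.trans (min_le_left _ _)⟩, hx⟩).le

/-- Theorem 3.7: convergence of the regularized x-solution set to the unregularized one
as the regularization parameter vanishes. -/
theorem reg_solSet_convergence {n d : ℕ} (hn : 1 ≤ n) (hd : 1 ≤ d)
    (X : Set (Fin d → ℝ)) (hXne : X.Nonempty) (hXcomp : IsCompact X) (hXconv : Convex ℝ X)
    (G : Fin n → (Fin d → ℝ) → Fin d → ℝ) (h : Fin n → (Fin d → ℝ) → ℝ)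
    (hGLip : ∀ j, ∃ LG : ℝ, ∀ x ∈ X, ∀ y ∈ X, ‖G j x - G j y‖ ≤ LG * ‖x - y‖)
    (hhLip : ∀ j, ∃ Lh : ℝ, ∀ x ∈ X, ∀ y ∈ X, |h j x - h j y| ≤ Lh * ‖x - y‖)
    (θhat : Fin n → ℝ) (hθhat : θhat ∈ simplex n)
    (r : ℝ) (hr : r ∈ Set.Icc (0 : ℝ) 1) :
    ∀ ε : ℝ, 0 < ε → ∃ lam0 : ℝ, 0 < lam0 ∧ ∀ lam : ℝ, 0 < lam → lam ≤ lam0 →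
      ∀ x ∈ solSet G h lam X θhat r,
        Metric.infDist x (solSet G h 0 X θhat r) ≤ ε :=
  reg_solSet_convergence_general X hXcomp G h hGLip hhLip θhat r
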